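/- Let P be a probability measure on ℝ^D and for x ∈ ℝ^D, m ∈ (0,1], sigma > 0 define Z_{x} = ∫ exp(−‖x − m·y‖₂²/(2·sigma²)) dP(y). Let s(x) = ∇ log p(x) where p(x) = (2π·sigma²)^{−D/2}·Z_x is the density of m·Y + sigma·Z (Y ∼ P, Z standard Gaussian). Then sigma²·‖s(x)‖₂² ≤ 2·log(1/Z_x) + 1 whenever Z_x ≤ 1. -/

import Mathlib

open MeasureTheory Real

private lemma texp_le {t σ : ℝ} (hσ : 0 < σ) :
    t * Real.exp (-t ^ 2 / (2 * σ ^ 2)) ≤ σ := by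
  have h2 : t ^ 2 / (2 * σ ^ 2) * (2 * σ ^ 2) = t ^ 2 := by field_simp
  have hkey : t ≤ σ * Real.exp (t ^ 2 / (2 * σ ^ 2)) := by
    have h1 := Real.add_one_le_exp (t ^ 2 / (2 * σ ^ 2))
    have h3 := mul_le_mul_of_nonneg_left h1 hσ.le
    nlinarith [sq_nonneg (t - σ), mul_pos hσ hσ]
  calc t * Real.exp (-t ^ 2 / (2 * σ ^ 2))
      ≤ (σ * Real.exp (t ^ 2 / (2 * σ ^ 2))) * Real.exp (-t ^ 2 / (2 * σ ^ 2)) :=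
        mul_le_mul_of_nonneg_right hkey (Real.exp_pos _).le
    _ = σ := by
        rw [mul_assoc, ← Real.exp_add, neg_div, add_neg_cancel, Real.exp_zero, mul_one]

private lemma ue_le {u L : ℝ} : u * Real.exp (-u) ≤ L * Real.exp (-u) + Real.exp (-(L + 1)) := by
  have h1 : u - L ≤ Real.exp (u - L - 1) := by
    have := Real.add_one_le_exp (u - L - 1); linarith
  have h2 := mul_le_mul_of_nonneg_right h1 (Real.exp_pos (-u)).le
  have h3 : Real.exp (u - L - 1) * Real.exp (-u) = Real.exp (-(L + 1)) := by
    rw [← Real.exp_add]; ring_nf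
  rw [h3] at h2
  nlinarith [h2]

private lemma aux_deriv {D : ℕ} (m σ : ℝ) (hσ : 0 < σ) (y w : EuclideanSpace ℝ (Fin D)) :
    HasFDerivAt (fun t : EuclideanSpace ℝ (Fin D) => Real.exp (-‖t - m • y‖ ^ 2 / (2 * σ ^ 2)))
      ((-(σ ^ 2)⁻¹ * Real.exp (-‖w - m • y‖ ^ 2 / (2 * σ ^ 2))) • innerSL ℝ (w - m • y)) w := by
  have hid : HasFDerivAt (fun t : EuclideanSpace ℝ (Fin D) => t - m • y)
      (ContinuousLinearMap.id ℝ _) w := (hasFDerivAt_id w).sub_const _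
  have hin := hid.inner ℝ hid
  have hsc := hin.const_mul (-(2 * σ ^ 2)⁻¹)
  have hexp := hsc.exp
  have hfun : (fun t : EuclideanSpace ℝ (Fin D) => Real.exp (-‖t - m • y‖ ^ 2 / (2 * σ ^ 2)))
      = fun t => Real.exp (-(2 * σ ^ 2)⁻¹ *
          (inner ℝ (t - m • y) (t - m • y) : ℝ)) := by
    funext t
    rw [real_inner_self_eq_norm_sq]
    congr 1
    ring
  rw [hfun]
  refine hexp.congr_fderiv (Eq.symm ?_)
  have hE : Real.exp (-(2 * σ ^ 2)⁻¹ * (inner ℝ (w - m • y) (w - m • y) : ℝ))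
      = Real.exp (-‖w - m • y‖ ^ 2 / (2 * σ ^ 2)) := by
    rw [real_inner_self_eq_norm_sq]; congr 1; ring
  refine ContinuousLinearMap.ext fun v => ?_
  simp only [ContinuousLinearMap.smul_apply, innerSL_apply_apply, hE,
    ContinuousLinearMap.coe_comp', Function.comp_apply, fderivInnerCLM_apply,
    ContinuousLinearMap.prod_apply, ContinuousLinearMap.coe_id', id_eq, smul_eq_mul]
  rw [real_inner_comm v (w - m • y)]
  have hσ2 : (σ : ℝ) ^ 2 ≠ 0 := by positivity
  field_simp
  ring

set_option maxHeartbeats 1000000 in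
/-- Score bound via the Gaussian-weighted mass: for a probability measure
`P`, `Z_x = ∫ exp(−‖x − m y‖²/(2σ²)) dP(y)`, `p(x) = (2πσ²)^{−D/2} Z_x`, and
`s = ∇ log p`, one has `σ² ‖s(x)‖² ≤ 2 log(1/Z_x) + 1` whenever `Z_x ≤ 1`. -/
theorem stmt_12 {D : ℕ}
    (P : Measure (EuclideanSpace ℝ (Fin D))) [IsProbabilityMeasure P]
    (m σ : ℝ) (hm0 : 0 < m) (hm1 : m ≤ 1) (hσ : 0 < σ)
    (Z : EuclideanSpace ℝ (Fin D) → ℝ)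
    (hZ : ∀ x, Z x = ∫ y, Real.exp (-‖x - m • y‖ ^ 2 / (2 * σ ^ 2)) ∂P)
    (p : EuclideanSpace ℝ (Fin D) → ℝ)
    (hp : ∀ x, p x = (2 * Real.pi * σ ^ 2) ^ (-(D : ℝ) / 2) * Z x)
    (x : EuclideanSpace ℝ (Fin D)) (hx : Z x ≤ 1) :
    σ ^ 2 * ‖gradient (fun y => Real.log (p y)) x‖ ^ 2 ≤ 2 * Real.log (1 / Z x) + 1 := by
  classical
  set c : ℝ := (2 * Real.pi * σ ^ 2) ^ (-(D : ℝ) / 2) with hcdef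
  have hc0 : 0 < c := Real.rpow_pos_of_pos (by positivity) _
  set F : EuclideanSpace ℝ (Fin D) → EuclideanSpace ℝ (Fin D) → ℝ :=
    fun w y => Real.exp (-‖w - m • y‖ ^ 2 / (2 * σ ^ 2)) with hFdef
  set F' : EuclideanSpace ℝ (Fin D) → EuclideanSpace ℝ (Fin D) →
      (EuclideanSpace ℝ (Fin D) →L[ℝ] ℝ) :=
    fun w y => (-(σ ^ 2)⁻¹ * F w y) • innerSL ℝ (w - m • y) with hF'def
  have hFpos : ∀ w y, 0 < F w y := fun w y => Real.exp_pos _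
  have hFcont : ∀ w, Continuous (fun y => F w y) := by
    intro w; rw [hFdef]; fun_prop
  have hFint : ∀ w, Integrable (fun y => F w y) P := by
    intro w
    refine (integrable_const (1 : ℝ)).mono' ((hFcont w).aestronglyMeasurable) ?_
    filter_upwards with y
    rw [Real.norm_eq_abs, abs_of_pos (hFpos w y)]
    simp only [hFdef]
    exact Real.exp_le_one_iff.mpr
      (div_nonpos_of_nonpos_of_nonneg (neg_nonpos.mpr (by positivity)) (by positivity))
  have hZpos : 0 < Z x := by
    rw [hZ x]
    rw [integral_pos_iff_support_of_nonneg (fun y => (hFpos x y).le) (hFint x)]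
    have hsupp : Function.support (fun y => F x y) = Set.univ := by
      ext y; simp [Function.mem_support, (hFpos x y).ne']
    rw [hsupp]
    simp
  -- constants
  set L : ℝ := Real.log (1 / Z x) with hLdef
  have hL0 : 0 ≤ L := by
    apply Real.log_nonneg
    rw [le_div_iff₀ hZpos]; linarith
  set b : ℝ := Real.sqrt (2 * L + 1) with hbdef
  have hbsq : b ^ 2 = 2 * L + 1 := Real.sq_sqrt (by linarith)
  have hb1 : 1 ≤ b := by
    nlinarith [Real.sqrt_nonneg (2 * L + 1), hbsq, hL0]
  have hb0 : 0 < b := lt_of_lt_of_le one_pos hb1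
  have hb2 : b ^ 2 = 2 * L + 1 := hbsq
  have hZL : Real.exp (-L) = Z x := by
    rw [hLdef, Real.log_div one_ne_zero hZpos.ne', Real.log_one]
    simp [Real.exp_log hZpos]
  -- norm of F'
  have hF'norm : ∀ w y, ‖F' w y‖ = (σ ^ 2)⁻¹ * (‖w - m • y‖ * F w y) := by
    intro w y
    have hmap : F' w y = innerSL ℝ ((-(σ ^ 2)⁻¹ * F w y) • (w - m • y)) := by
      simp only [hF'def]
      ext v
      simp [real_inner_smul_left]
    rw [hmap, innerSL_apply_norm, norm_smul, Real.norm_eq_abs, abs_mul, abs_neg, abs_inv,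
      abs_of_pos (show (0:ℝ) < σ ^ 2 by positivity), abs_of_pos (hFpos w y)]
    ring
  -- derivative of the integral
  have hΦ : HasFDerivAt (fun w => ∫ y, F w y ∂P) (∫ y, F' x y ∂P) x := by
    have hbound : ∀ y : EuclideanSpace ℝ (Fin D), ∀ w ∈ Metric.ball x 1, ‖F' w y‖ ≤ σ⁻¹ := by
      intro y w _
      rw [hF'norm w y]
      have h1 : ‖w - m • y‖ * F w y ≤ σ := texp_le hσ
      calc (σ ^ 2)⁻¹ * (‖w - m • y‖ * F w y) ≤ (σ ^ 2)⁻¹ * σ :=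
            mul_le_mul_of_nonneg_left h1 (by positivity)
        _ = σ⁻¹ := by rw [sq, mul_inv, mul_assoc, inv_mul_cancel₀ hσ.ne', mul_one]
    have hF'cont : Continuous (fun y => F' x y) := by
      simp only [hF'def]
      apply Continuous.smul (f := fun y => -(σ ^ 2)⁻¹ * F x y) (g := fun y => innerSL ℝ (x - m • y))
      · simp only [hFdef]; fun_prop
      · exact (innerSL ℝ).continuous.comp (by fun_prop)
    exact hasFDerivAt_integral_of_dominated_of_fderiv_le (bound := fun _ => σ⁻¹) (Metric.ball_mem_nhds x one_pos)
      (Filter.Eventually.of_forall fun w => (hFcont w).aestronglyMeasurable)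
      (hFint x)
      hF'cont.aestronglyMeasurable
      (Filter.Eventually.of_forall hbound)
      (integrable_const _)
      (Filter.Eventually.of_forall fun y w _ => aux_deriv m σ hσ y w)
  set Φ : EuclideanSpace ℝ (Fin D) →L[ℝ] ℝ := ∫ y, F' x y ∂P with hΦdef
  -- bound on ‖Φ‖
  have hΦnorm : ‖Φ‖ ≤ σ⁻¹ * (Z x * b) := by
    have hpoint : ∀ y, ‖F' x y‖ ≤
        (σ * b)⁻¹ * ((2 * L + 1 / 2) * F x y + Real.exp (-(L + 1))) := by
      intro y
      rw [hF'norm x y]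
      set s : ℝ := ‖x - m • y‖ with hsdef
      have hs0 : 0 ≤ s := norm_nonneg _
      have hFv : F x y = Real.exp (-(s ^ 2 / (2 * σ ^ 2))) := by
        simp only [hFdef]; rw [neg_div]
      have hB : (s ^ 2 / (2 * σ ^ 2)) * F x y ≤ L * F x y + Real.exp (-(L + 1)) := by
        rw [hFv]; exact ue_le
      have h2σ : (0 : ℝ) < 2 * σ ^ 2 := by positivity
      have hB2 : s ^ 2 * F x y ≤ 2 * σ ^ 2 * (L * F x y + Real.exp (-(L + 1))) := by
        have := mul_le_mul_of_nonneg_left hB h2σ.le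
        calc s ^ 2 * F x y = 2 * σ ^ 2 * (s ^ 2 / (2 * σ ^ 2) * F x y) := by
              field_simp
          _ ≤ _ := this
      have hb2' : σ ^ 2 * b ^ 2 * F x y = σ ^ 2 * (2 * L + 1) * F x y := by
        rw [hb2]
      have hkey : s * b * F x y ≤
          σ * ((2 * L + 1 / 2) * F x y + Real.exp (-(L + 1))) := by
        nlinarith [hB2, mul_nonneg (sq_nonneg (s - σ * b)) (hFpos x y).le, hσ, hb2',
          mul_pos hσ hσ, (Real.exp_pos (-(L + 1))).le, (hFpos x y).le]
      calc (σ ^ 2)⁻¹ * (s * F x y)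
          = (σ ^ 2 * b)⁻¹ * (s * b * F x y) := by
            field_simp
        _ ≤ (σ ^ 2 * b)⁻¹ * (σ * ((2 * L + 1 / 2) * F x y + Real.exp (-(L + 1)))) :=
            mul_le_mul_of_nonneg_left hkey (by positivity)
        _ = (σ * b)⁻¹ * ((2 * L + 1 / 2) * F x y + Real.exp (-(L + 1))) := by
            field_simp
    have hgint : Integrable
        (fun y => (σ * b)⁻¹ * ((2 * L + 1 / 2) * F x y + Real.exp (-(L + 1)))) P :=
      (((hFint x).const_mul _).add (integrable_const _)).const_mul _
    calc ‖Φ‖ ≤ ∫ y, ‖F' x y‖ ∂P := norm_integral_le_integral_norm _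
      _ ≤ ∫ y, (σ * b)⁻¹ * ((2 * L + 1 / 2) * F x y + Real.exp (-(L + 1))) ∂P := by
          apply integral_mono_of_nonneg
          · exact Filter.Eventually.of_forall fun y => norm_nonneg _
          · exact hgint
          · exact Filter.Eventually.of_forall hpoint
      _ = (σ * b)⁻¹ * ((2 * L + 1 / 2) * Z x + Real.exp (-(L + 1))) := by
          rw [integral_const_mul, integral_add ((hFint x).const_mul _) (integrable_const _),
            integral_const_mul, integral_const]
          simp [measure_univ, hZ x, hFdef]
      _ ≤ (σ * b)⁻¹ * ((2 * L + 1 / 2) * Z x + Z x / 2) := by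
          have he2 : (2 : ℝ) ≤ Real.exp 1 := by
            nlinarith [Real.exp_one_gt_d9]
          have he' : Real.exp (-(L + 1)) ≤ Z x / 2 := by
            rw [show -(L + 1) = -L + -1 by ring, Real.exp_add, hZL, Real.exp_neg]
            rw [div_eq_mul_inv]
            apply mul_le_mul_of_nonneg_left _ hZpos.le
            exact inv_anti₀ two_pos he2
          apply mul_le_mul_of_nonneg_left _ (by positivity)
          linarith
      _ = σ⁻¹ * (Z x * b) := by
          have : (2 * L + 1 / 2) * Z x + Z x / 2 = b ^ 2 * Z x := by
            rw [hb2]; ring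
          rw [this]
          field_simp
  -- gradient of log p
  have hpx : p x ≠ 0 := by rw [hp x]; positivity
  have hlog : HasFDerivAt (fun w => Real.log (p w)) ((Z x)⁻¹ • Φ) x := by
    have hZfun : Z = fun w => ∫ y, F w y ∂P := funext hZ
    have hZd : HasFDerivAt Z Φ x := by rw [hZfun]; exact hΦ
    have h1 : HasFDerivAt (fun w => c * Z w) (c • Φ) x := hZd.const_mul c
    have h2 := h1.log (by rw [← hp x]; exact hpx)
    have hfun2 : (fun w => Real.log (p w)) = fun w => Real.log (c * Z w) :=
      funext fun w => by rw [hp w]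
    rw [hfun2]
    refine h2.congr_fderiv (Eq.symm ?_)
    rw [smul_smul]
    congr 1
    field_simp
  have hgrad : gradient (fun w => Real.log (p w)) x =
      (InnerProductSpace.toDual ℝ (EuclideanSpace ℝ (Fin D))).symm ((Z x)⁻¹ • Φ) :=
    hlog.hasGradientAt.gradient
  have hgn : ‖gradient (fun w => Real.log (p w)) x‖ ≤ σ⁻¹ * b := by
    rw [hgrad, LinearIsometryEquiv.norm_map, norm_smul, Real.norm_eq_abs,
      abs_of_pos (inv_pos.mpr hZpos)]
    calc (Z x)⁻¹ * ‖Φ‖ ≤ (Z x)⁻¹ * (σ⁻¹ * (Z x * b)) :=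
          mul_le_mul_of_nonneg_left hΦnorm (by positivity)
      _ = σ⁻¹ * b := by field_simp
  have hsq : ‖gradient (fun w => Real.log (p w)) x‖ ^ 2 ≤ (σ⁻¹ * b) ^ 2 :=
    pow_le_pow_left₀ (norm_nonneg _) hgn 2
  calc σ ^ 2 * ‖gradient (fun w => Real.log (p w)) x‖ ^ 2
      ≤ σ ^ 2 * (σ⁻¹ * b) ^ 2 := mul_le_mul_of_nonneg_left hsq (by positivity)
    _ = b ^ 2 := by field_simp
    _ = 2 * L + 1 := hb2
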